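/- arXiv:1907.12220 — 2 statements merged into one kernel-verified Lean document; each statement's English description precedes it below -/
import Mathlib

section
/- Let p be a prime, n ≥ 0, and r_n = p^{-1/((p−1)p^n)}. Let F_n be the E-vector space of sequences (c_k)_k in E such that |c_k| r_n^{-k} ε^k → 0 for all ε < 1, topologized as the projective limit over ε < 1 of the Banach spaces with norm sup_k |c_k| r_n^{-k} ε^k. Then the continuous dual of F_n is identified with the space G_n of sequences (d_k)_k in E for which there exists R > r_n with |d_k| R^k → 0, via the pairing ((c_k),(d_k)) ↦ ∑_k c_k d_k. -/
open Filter

private lemma stmt5_summable {E : Type*} [NontriviallyNormedField E] [IsUltrametricDist E]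
    [CompleteSpace E] (f : ℕ → E) (h : Tendsto (fun k => ‖f k‖) atTop (nhds 0)) : Summable f :=
  NonarchimedeanAddGroup.summable_of_tendsto_cofinite_zero
    (by rw [Nat.cofinite_eq_atTop]; exact tendsto_zero_iff_norm_tendsto_zero.mpr h)

private lemma stmt5_ident (rn ε : ℝ) (hrn : rn ≠ 0) (hε : ε ≠ 0) (x y : ℝ) (k : ℕ) :
    (x * (rn⁻¹) ^ k * ε ^ k) * (y * (rn / ε) ^ k) = x * y := by
  have hid : rn⁻¹ * ε * (rn / ε) = 1 := by field_simp
  calc (x * (rn⁻¹) ^ k * ε ^ k) * (y * (rn / ε) ^ k)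
      = x * y * (rn⁻¹ * ε * (rn / ε)) ^ k := by rw [mul_pow, mul_pow]; ring
    _ = x * y := by rw [hid, one_pow, mul_one]

private lemma stmt5_aux1 (a : ℕ → ℝ) (h : Tendsto a atTop (nhds 0)) (N : ℕ) :
    Tendsto (fun k => if k < N then (0:ℝ) else a k) atTop (nhds 0) :=
  h.congr' (by
    filter_upwards [eventually_ge_atTop N] with k hk
    rw [if_neg (not_lt.mpr hk)])

private lemma stmt5_aux2 (a : ℕ → ℝ) (ha : ∀ k, 0 ≤ a k) (h : Tendsto a atTop (nhds 0)) :
    Tendsto (fun N => ⨆ k, if k < N then (0:ℝ) else a k) atTop (nhds 0) := by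
  have hb : ∀ M, BddAbove (Set.range fun k => if k < M then (0:ℝ) else a k) :=
    fun M => (stmt5_aux1 a h M).bddAbove_range
  rw [Metric.tendsto_atTop]
  intro δ hδ
  obtain ⟨N, hN⟩ := (Metric.tendsto_atTop.mp h) (δ / 2) (by linarith)
  refine ⟨N, fun M hM => ?_⟩
  have h0 : 0 ≤ ⨆ k, if k < M then (0:ℝ) else a k := by
    refine le_trans ?_ (le_ciSup (hb M) M)
    rw [if_neg (lt_irrefl M)]
    exact ha M
  have hle : (⨆ k, if k < M then (0:ℝ) else a k) ≤ δ / 2 := by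
    refine ciSup_le fun k => ?_
    split_ifs with hk
    · linarith
    · have hkN : N ≤ k := le_trans hM (not_lt.mp hk)
      have := hN k hkN
      rw [Real.dist_eq, sub_zero] at this
      have := (le_abs_self (a k)).trans_lt this
      linarith
  rw [Real.dist_eq, sub_zero, abs_of_nonneg h0]
  linarith

/-
STATEMENT 5: r_n = p^{-1/((p−1)p^n)}.  F_n = sequences (c_k) in E with ‖c_k‖ r_n^{-k} ε^k → 0 for
all ε < 1, topologized by the family of norms |c|_ε = sup_k ‖c_k‖ r_n^{-k} ε^k (projective limit
over ε < 1 of the corresponding Banach spaces); a linear functional on F_n is continuous iff it is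
bounded for one of these norms.  G_n = sequences (d_k) with ‖d_k‖ R^k → 0 for some R > r_n.
Claim: the continuous dual of F_n is identified with G_n via ((c_k),(d_k)) ↦ ∑_k c_k d_k: every
d ∈ G_n yields a continuous functional, and every continuous functional arises from a unique d ∈ G_n.
-/
theorem stmt5 (p : ℕ) [hp : Fact p.Prime] (n : ℕ)
    (E : Type*) [NontriviallyNormedField E] [IsUltrametricDist E] [CompleteSpace E]
    (rn : ℝ) (hrn : rn = (p : ℝ) ^ (-(1 / (((p : ℝ) - 1) * (p : ℝ) ^ n)) : ℝ))
    (Fn : Submodule E (ℕ → E))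
    (hFn : ∀ c : ℕ → E, c ∈ Fn ↔ ∀ ε : ℝ, 0 < ε → ε < 1 →
      Tendsto (fun k => ‖c k‖ * (rn⁻¹) ^ k * ε ^ k) atTop (nhds 0))
    (Gn : Set (ℕ → E))
    (hGn : ∀ d : ℕ → E, d ∈ Gn ↔ ∃ R : ℝ, rn < R ∧
      Tendsto (fun k => ‖d k‖ * R ^ k) atTop (nhds 0)) :
    (∀ d ∈ Gn, ∃ φ : Fn →ₗ[E] E,
        (∃ ε : ℝ, 0 < ε ∧ ε < 1 ∧ ∃ C : ℝ, 0 < C ∧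
          ∀ c : Fn, ‖φ c‖ ≤ C * ⨆ k : ℕ, ‖(c : ℕ → E) k‖ * (rn⁻¹) ^ k * ε ^ k) ∧
        (∀ c : Fn, φ c = ∑' k : ℕ, (c : ℕ → E) k * d k)) ∧
    (∀ φ : Fn →ₗ[E] E,
        (∃ ε : ℝ, 0 < ε ∧ ε < 1 ∧ ∃ C : ℝ, 0 < C ∧
          ∀ c : Fn, ‖φ c‖ ≤ C * ⨆ k : ℕ, ‖(c : ℕ → E) k‖ * (rn⁻¹) ^ k * ε ^ k) →
        ∃! d : ℕ → E, d ∈ Gn ∧ ∀ c : Fn, φ c = ∑' k : ℕ, (c : ℕ → E) k * d k) := by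
  have hrn0 : 0 < rn := by
    rw [hrn]
    exact Real.rpow_pos_of_pos (by exact_mod_cast hp.out.pos) _
  -- basis sequences
  have heF : ∀ k : ℕ, Pi.single k (1 : E) ∈ Fn := by
    intro k
    rw [hFn]
    intro ε hε0 hε1
    refine tendsto_const_nhds.congr' ?_
    filter_upwards [eventually_gt_atTop k] with j hj
    simp [Pi.single_apply, hj.ne']
  set eF : ℕ → Fn := fun k => ⟨Pi.single k (1 : E), heF k⟩ with heFdef
  -- key multiplicative estimate
  have hprod : ∀ (c d : ℕ → E) (ε : ℝ), 0 < ε → ε < 1 → c ∈ Fn →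
      Tendsto (fun k => ‖d k‖ * (rn / ε) ^ k) atTop (nhds 0) →
      Tendsto (fun k => ‖c k * d k‖) atTop (nhds 0) := by
    intro c d ε hε0 hε1 hc hd
    have h1 := (hFn c).mp hc ε hε0 hε1
    have h2 := h1.mul hd
    rw [mul_zero] at h2
    refine h2.congr fun k => ?_
    rw [norm_mul]
    exact stmt5_ident rn ε hrn0.ne' hε0.ne' _ _ k
  constructor
  · -- Part 1
    intro d hd
    obtain ⟨R, hR, hdR⟩ := (hGn d).mp hd
    have hRpos : 0 < R := lt_trans hrn0 hR
    set ε : ℝ := (rn / R + 1) / 2 with hεdef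
    have hq : rn / R < 1 := (div_lt_one hRpos).mpr hR
    have hq0 : 0 < rn / R := div_pos hrn0 hRpos
    have hε0 : 0 < ε := by rw [hεdef]; linarith
    have hε1 : ε < 1 := by rw [hεdef]; linarith
    have hεgt : rn / R < ε := by rw [hεdef]; linarith
    have hr' : rn / ε < R := by
      rw [div_lt_iff₀ hε0]
      have := (div_lt_iff₀ hRpos).mp hεgt
      linarith
    have hr'0 : 0 < rn / ε := div_pos hrn0 hε0
    have hdr' : Tendsto (fun k => ‖d k‖ * (rn / ε) ^ k) atTop (nhds 0) := by
      refine squeeze_zero (fun k => by positivity) (fun k => ?_) hdR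
      exact mul_le_mul_of_nonneg_left (pow_le_pow_left₀ hr'0.le hr'.le k) (norm_nonneg _)
    have hnorm : ∀ c : Fn, Tendsto (fun k => ‖(c : ℕ → E) k * d k‖) atTop (nhds 0) :=
      fun c => hprod _ d ε hε0 hε1 c.2 hdr'
    have hsum : ∀ c : Fn, Summable (fun k => (c : ℕ → E) k * d k) :=
      fun c => stmt5_summable _ (hnorm c)
    obtain ⟨C0, hC0⟩ := hdr'.bddAbove_range
    have hC0' : ∀ k, ‖d k‖ * (rn / ε) ^ k ≤ C0 := fun k => hC0 (Set.mem_range_self k)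
    have hC0nn : 0 ≤ C0 := le_trans (by positivity) (hC0' 0)
    refine ⟨{ toFun := fun c => ∑' k, (c : ℕ → E) k * d k,
              map_add' := ?_, map_smul' := ?_ }, ⟨ε, hε0, hε1, C0 + 1, by linarith, ?_⟩, fun c => rfl⟩
    · intro a b
      simp only [Submodule.coe_add, Pi.add_apply, add_mul]
      exact Summable.tsum_add (hsum a) (hsum b)
    · intro m a
      simp only [SetLike.val_smul, Pi.smul_apply, smul_eq_mul, RingHom.id_apply, mul_assoc]
      exact tsum_mul_left
    · intro c
      simp only [LinearMap.coe_mk, AddHom.coe_mk]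
      refine le_trans (IsUltrametricDist.norm_tsum_le _) ?_
      have hbt : BddAbove (Set.range fun k => ‖(c : ℕ → E) k‖ * (rn⁻¹) ^ k * ε ^ k) :=
        ((hFn _).mp c.2 ε hε0 hε1).bddAbove_range
      have hsupnn : 0 ≤ ⨆ k : ℕ, ‖(c : ℕ → E) k‖ * (rn⁻¹) ^ k * ε ^ k :=
        le_trans (by positivity) (le_ciSup hbt 0)
      refine ciSup_le fun k => ?_
      rw [norm_mul, ← stmt5_ident rn ε hrn0.ne' hε0.ne' ‖(c : ℕ → E) k‖ ‖d k‖ k]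
      calc (‖(c : ℕ → E) k‖ * (rn⁻¹) ^ k * ε ^ k) * (‖d k‖ * (rn / ε) ^ k)
          ≤ (⨆ k : ℕ, ‖(c : ℕ → E) k‖ * (rn⁻¹) ^ k * ε ^ k) * (C0 + 1) := by
            refine mul_le_mul (le_ciSup hbt k) (le_trans (hC0' k) (by linarith))
              (by positivity) hsupnn
        _ = (C0 + 1) * ⨆ k : ℕ, ‖(c : ℕ → E) k‖ * (rn⁻¹) ^ k * ε ^ k := mul_comm _ _
  · -- Part 2
    rintro φ ⟨ε, hε0, hε1, C, hC0, hφ⟩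
    set d : ℕ → E := fun k => φ (eF k) with hddef
    have hsup_single : ∀ k : ℕ,
        (⨆ j : ℕ, ‖(eF k : ℕ → E) j‖ * (rn⁻¹) ^ j * ε ^ j) ≤ (rn⁻¹) ^ k * ε ^ k := by
      intro k
      refine ciSup_le fun j => ?_
      rcases eq_or_ne j k with rfl | hjk
      · simp [heFdef, Pi.single_eq_same]
      · simp only [heFdef, Pi.single_apply, if_neg hjk, norm_zero, zero_mul]
        positivity
    have hd_bound : ∀ k, ‖d k‖ ≤ C * ((rn⁻¹) ^ k * ε ^ k) :=
      fun k => (hφ (eF k)).trans (mul_le_mul_of_nonneg_left (hsup_single k) hC0.le)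
    set s : ℝ := Real.sqrt ε with hsdef
    have hs0 : 0 < s := Real.sqrt_pos.mpr hε0
    have hss : s * s = ε := Real.mul_self_sqrt hε0.le
    have hs1 : s < 1 := by nlinarith
    set R : ℝ := rn / s with hRdef
    have hRgt : rn < R := by
      rw [hRdef, lt_div_iff₀ hs0]
      nlinarith
    have hR0 : 0 < R := hrn0.trans hRgt
    have hkey : ∀ k : ℕ, (rn⁻¹) ^ k * ε ^ k * R ^ k = s ^ k := by
      intro k
      rw [← mul_pow, ← mul_pow]
      congr 1
      rw [hRdef, ← hss]
      field_simp
    have hdR : Tendsto (fun k => ‖d k‖ * R ^ k) atTop (nhds 0) := by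
      have hlim : Tendsto (fun k : ℕ => C * s ^ k) atTop (nhds 0) := by
        have := (tendsto_pow_atTop_nhds_zero_of_lt_one hs0.le hs1).const_mul C
        simpa using this
      refine squeeze_zero (fun k => by positivity) (fun k => ?_) hlim
      calc ‖d k‖ * R ^ k ≤ C * ((rn⁻¹) ^ k * ε ^ k) * R ^ k :=
            mul_le_mul_of_nonneg_right (hd_bound k) (by positivity)
        _ = C * s ^ k := by rw [mul_assoc, hkey]
    have hdGn : d ∈ Gn := (hGn d).mpr ⟨R, hRgt, hdR⟩
    -- evaluation of the pairing at basis vectors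
    have heval : ∀ (k : ℕ) (y : ℕ → E), ∑' j : ℕ, (eF k : ℕ → E) j * y j = y k := by
      intro k y
      rw [tsum_eq_single k (fun j hj => by simp [heFdef, Pi.single_apply, hj])]
      simp [heFdef, Pi.single_eq_same]
    -- the pairing identity
    have hpair : ∀ c : Fn, φ c = ∑' k : ℕ, (c : ℕ → E) k * d k := by
      intro c
      have htc : Tendsto (fun k => ‖(c : ℕ → E) k‖ * (rn⁻¹) ^ k * ε ^ k) atTop (nhds 0) :=
        (hFn _).mp c.2 ε hε0 hε1
      have hsum : Summable (fun k => (c : ℕ → E) k * d k) := by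
        refine stmt5_summable _ ?_
        have hlim : Tendsto (fun k => C * (‖(c : ℕ → E) k‖ * (rn⁻¹) ^ k * ε ^ k))
            atTop (nhds 0) := by
          have := htc.const_mul C
          simpa using this
        refine squeeze_zero (fun k => norm_nonneg _) (fun k => ?_) hlim
        calc ‖(c : ℕ → E) k * d k‖ = ‖(c : ℕ → E) k‖ * ‖d k‖ := norm_mul _ _
          _ ≤ ‖(c : ℕ → E) k‖ * (C * ((rn⁻¹) ^ k * ε ^ k)) :=
              mul_le_mul_of_nonneg_left (hd_bound k) (norm_nonneg _)
          _ = C * (‖(c : ℕ → E) k‖ * (rn⁻¹) ^ k * ε ^ k) := by ring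
      have hcoe : ∀ (N : ℕ) (j : ℕ),
          ((c - ∑ k ∈ Finset.range N, (c : ℕ → E) k • eF k : Fn) : ℕ → E) j =
            if j < N then 0 else (c : ℕ → E) j := by
        intro N j
        have : ((∑ k ∈ Finset.range N, (c : ℕ → E) k • eF k : Fn) : ℕ → E) j =
            ∑ k ∈ Finset.range N, (c : ℕ → E) k * (Pi.single k (1 : E) : ℕ → E) j := by
          rw [AddSubmonoidClass.coe_finset_sum, Finset.sum_apply]
          refine Finset.sum_congr rfl fun k _ => ?_
          simp [heFdef, smul_eq_mul]
        rw [Submodule.coe_sub, Pi.sub_apply, this]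
        simp only [Pi.single_apply, mul_ite, mul_one, mul_zero]
        rw [Finset.sum_ite_eq (Finset.range N) j fun k => (c : ℕ → E) k]
        by_cases h : j < N <;> simp [Finset.mem_range, h]
      have hpart : ∀ N : ℕ,
          φ c - ∑ k ∈ Finset.range N, (c : ℕ → E) k * d k =
          φ (c - ∑ k ∈ Finset.range N, (c : ℕ → E) k • eF k) := by
        intro N
        rw [map_sub, map_sum]
        congr 1
        refine Finset.sum_congr rfl fun k _ => ?_
        rw [map_smul, smul_eq_mul]
      have hterm : ∀ N : ℕ,
          ‖φ (c - ∑ k ∈ Finset.range N, (c : ℕ → E) k • eF k)‖ ≤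
            C * ⨆ j : ℕ, if j < N then (0:ℝ)
              else ‖(c : ℕ → E) j‖ * (rn⁻¹) ^ j * ε ^ j := by
        intro N
        refine (hφ _).trans (le_of_eq ?_)
        congr 1
        refine iSup_congr fun j => ?_
        rw [hcoe N j]
        split_ifs with h
        · simp
        · rfl
      have hT : Tendsto (fun N => C * ⨆ j : ℕ, if j < N then (0:ℝ)
          else ‖(c : ℕ → E) j‖ * (rn⁻¹) ^ j * ε ^ j) atTop (nhds 0) := by
        have := (stmt5_aux2 _ (fun k => by positivity) htc).const_mul C
        simpa using this
      have hdiff : Tendsto (fun N => φ c - ∑ k ∈ Finset.range N, (c : ℕ → E) k * d k)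
          atTop (nhds 0) := by
        rw [tendsto_zero_iff_norm_tendsto_zero]
        refine squeeze_zero (fun N => norm_nonneg _) (fun N => ?_) hT
        rw [hpart N]
        exact hterm N
      have h1 : Tendsto (fun N => ∑ k ∈ Finset.range N, (c : ℕ → E) k * d k)
          atTop (nhds (φ c)) := by
        have := hdiff.const_sub (φ c)
        simpa using this
      exact tendsto_nhds_unique h1 hsum.hasSum.tendsto_sum_nat
    refine ⟨d, ⟨hdGn, hpair⟩, ?_⟩
    rintro y ⟨hyGn, hy⟩
    funext k
    have h1 := hy (eF k)
    rw [heval k y] at h1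
    exact h1.symm
end

section
/- Let H be a topologically finitely generated powerful pro-p group. Then for every i ≥ 0, the (i+1)-st term of the lower p-series satisfies P_{i+1}(H) = { x^{p^i} : x ∈ H }. -/
/-- The subgroup of `G` topologically generated by the `p`-th powers of elements of a subgroup
`K` together with commutators `[K, G]`: the closure of `K^p [K, G]`. -/
def pPowComm (p : ℕ) {G : Type*} [Group G] [TopologicalSpace G] [IsTopologicalGroup G]
    (K : Subgroup G) : Subgroup G :=
  (Subgroup.closure ((fun x => x ^ p) '' (K : Set G)) ⊔ ⁅K, (⊤ : Subgroup G)⁆).topologicalClosure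

/-- The lower `p`-series of `G`, 0-indexed: `lowerPSeries p G i` is `P_{i+1}(G)` of the paper,
so `lowerPSeries p G 0 = P_1(G) = G` and `P_{i+1} = cl(P_i^p [P_i, G])`. -/
def lowerPSeries (p : ℕ) (G : Type*) [Group G] [TopologicalSpace G] [IsTopologicalGroup G] :
    ℕ → Subgroup G
  | 0 => ⊤
  | (i + 1) => pPowComm p (lowerPSeries p G i)

/-- `G` is a pro-`p` group: a compact, Hausdorff, totally disconnected topological group in which
every open normal subgroup has index a power of `p`. -/
def IsProP (p : ℕ) (G : Type*) [Group G] [TopologicalSpace G] [IsTopologicalGroup G] : Prop :=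
  CompactSpace G ∧ T2Space G ∧ TotallyDisconnectedSpace G ∧
    ∀ N : Subgroup G, N.Normal → IsOpen (N : Set G) → ∃ m : ℕ, Nat.card (G ⧸ N) = p ^ m

open scoped commutatorElement

/-- `G` is powerful: `p` odd and `G/cl(G^p)` abelian, or `p = 2` and `G/cl(G^4)` abelian;
equivalently every commutator lies in the closure of the subgroup generated by `p`-th
(resp. fourth) powers. -/
def IsPowerful (p : ℕ) (G : Type*) [Group G] [TopologicalSpace G] [IsTopologicalGroup G] : Prop :=
  (Odd p ∧ ∀ x y : G,
      ⁅x, y⁆ ∈ (Subgroup.closure ((fun g : G => g ^ p) '' Set.univ)).topologicalClosure) ∨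
  (p = 2 ∧ ∀ x y : G,
      ⁅x, y⁆ ∈ (Subgroup.closure ((fun g : G => g ^ 4) '' Set.univ)).topologicalClosure)

/-- `G` is topologically finitely generated. -/
def TopFG (G : Type*) [Group G] [TopologicalSpace G] [IsTopologicalGroup G] : Prop :=
  ∃ S : Finset G, (Subgroup.closure (S : Set G)).topologicalClosure = ⊤


/-!
Write `⟨K^n⟩` (`powSubgroup n K`) for the subgroup generated by `n`-th powers of elements of `K`,
and `q = powerfulExponent p` (`4` if `p = 2`, else `p`), so that a finite group `G` is powerful
when `[G, G] ≤ ⟨G^q⟩`. For finite `p`-groups the Lubotzky–Mann theory gives two facts, both by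
induction on the order: if `[N, G] ≤ ⟨N^q⟩` then `[⟨N^p⟩, G] ≤ ⟨⟨N^p⟩^q⟩`, and if `G` is
powerful then every element of `⟨G^p⟩` is a `p`-th power. Together they show that the lower
`p`-series of a finite powerful `p`-group is `P_{i+1} = ⟨P_i^p⟩ = {x^{p^i}}`.

A powerful pro-`p` group `H` maps onto the finite powerful `p`-groups `H/N`, `N` open normal, and
`P_{i+1}(H)` maps into `P_{i+1}(H/N)`. So every `g ∈ P_{i+1}(H)` is a `p^i`-th power modulo every
open normal subgroup; as the set of `p^i`-th powers is compact, hence closed, `g` is a `p^i`-th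
power.
-/

open Subgroup

theorem Nat.choose_two_succ (n : ℕ) : (n + 1).choose 2 = n.choose 2 + n := by
  rw [Nat.choose_succ_succ, Nat.choose_one_right, add_comm]

section Commutators

variable {G : Type*} [Group G]

theorem mem_center_iff_commutatorElement_eq_one {z : G} :
    z ∈ center G ↔ ∀ g : G, ⁅z, g⁆ = 1 := by
  simp only [mem_center_iff, commutatorElement_eq_one_iff_mul_comm, eq_comm]

theorem normal_of_le_center {K : Subgroup G} (h : K ≤ center G) : K.Normal :=
  ⟨fun n hn g => by rwa [mem_center_iff.1 (h hn) g, mul_inv_cancel_right]⟩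

theorem commutatorElement_pow_left (x g : G) (hz : ⁅x, ⁅x, g⁆⁆ ∈ center G) (n : ℕ) :
    ⁅x ^ n, g⁆ = ⁅x, ⁅x, g⁆⁆ ^ n.choose 2 * ⁅x, g⁆ ^ n := by
  set c := ⁅x, g⁆
  set z := ⁅x, c⁆
  have hc (m : ℕ) (t : G) : z ^ m * t = t * z ^ m := (mem_center_iff.1 (pow_mem hz m) t).symm
  have hconj : x * c * x⁻¹ = z * c := by simp only [z, commutatorElement_def]; group
  induction n with
  | zero => simp
  | succ n ih =>
    calc ⁅x ^ (n + 1), g⁆ = x * (z ^ n.choose 2 * c ^ n) * x⁻¹ * c := by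
          rw [← ih]; simp only [c, commutatorElement_def, pow_succ']; group
      _ = z ^ n.choose 2 * (x * c * x⁻¹) ^ n * c := by
          rw [← mul_assoc x, ← hc, conj_pow]; group
      _ = z ^ (n + 1).choose 2 * c ^ (n + 1) := by
          rw [hconj, (Commute.mul_pow (mem_center_iff.1 hz c).symm), Nat.choose_two_succ]; group

theorem commutatorElement_pow_left_of_mem_center {x g : G} (h : ⁅x, g⁆ ∈ center G) (n : ℕ) :
    ⁅x ^ n, g⁆ = ⁅x, g⁆ ^ n := by
  have hz : ⁅x, ⁅x, g⁆⁆ = 1 := commutatorElement_eq_one_iff_mul_comm.2 (mem_center_iff.1 h x)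
  rw [commutatorElement_pow_left x g (hz ▸ one_mem _), hz, one_pow, one_mul]

theorem mul_pow_of_commutatorElement_mem_center (a b : G) (hw : ⁅b, a⁆ ∈ center G) (n : ℕ) :
    (a * b) ^ n = a ^ n * b ^ n * ⁅b, a⁆ ^ n.choose 2 := by
  set w := ⁅b, a⁆
  have hc (m : ℕ) (t : G) : w ^ m * t = t * w ^ m := (mem_center_iff.1 (pow_mem hw m) t).symm
  have hba : b * a = a * b * w := by
    rw [← pow_one w, ← hc]; simp only [w, pow_one, commutatorElement_def]; group
  have hswap (m : ℕ) : b ^ m * a = a * b ^ m * w ^ m := by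
    induction m with
    | zero => simp
    | succ m ih =>
      calc b ^ (m + 1) * a = b ^ m * (b * a) := by group
        _ = a * b ^ m * (w ^ m * b) * w := by rw [hba, ← mul_assoc, ← mul_assoc, ih]; group
        _ = a * b ^ (m + 1) * w ^ (m + 1) := by rw [hc]; group
  induction n with
  | zero => simp
  | succ n ih =>
    calc (a * b) ^ (n + 1) = a ^ n * (b ^ n * a) * b * w ^ n.choose 2 := by
          rw [pow_succ, ih, mul_assoc _ (w ^ _), hc]; group
      _ = a ^ (n + 1) * b ^ n * (w ^ n * b) * w ^ n.choose 2 := by rw [hswap]; group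
      _ = a ^ (n + 1) * b ^ (n + 1) * w ^ (n + 1).choose 2 := by
          rw [hc, Nat.choose_two_succ]; group

theorem commutator_zpowers_sup_eq_bot {C : Subgroup G} (hC : C ≤ center G) (y : G) :
    ⁅zpowers y ⊔ C, zpowers y ⊔ C⁆ = ⊥ := by
  have hcen (S : Subgroup G) : C ≤ centralizer S := hC.trans (center_le_centralizer _)
  rw [commutator_eq_bot_iff_le_centralizer]
  exact sup_le (le_centralizer_iff.1 (sup_le (le_centralizer _) (hcen _))) (hcen _)

theorem commutator_zpowers_sup_le {K T : Subgroup G} [T.Normal] (h : ⁅K, ⊤⁆ ≤ T) (x : G) :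
    ⁅zpowers x ⊔ K, zpowers x ⊔ K⁆ ≤ T := by
  have hsurj := QuotientGroup.mk'_surjective T
  have hK : K.map (QuotientGroup.mk' T) ≤ center (G ⧸ T) := by
    rw [← commutator_top_right_eq_bot_iff_le_center, ← map_top_of_surjective _ hsurj,
      ← map_commutator, Subgroup.map_eq_bot_iff, QuotientGroup.ker_mk']
    exact h
  have := commutator_zpowers_sup_eq_bot hK (QuotientGroup.mk' T x)
  rwa [← MonoidHom.map_zpowers, ← Subgroup.map_sup, ← map_commutator, Subgroup.map_eq_bot_iff,
    QuotientGroup.ker_mk'] at this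

end Commutators

section PowSubgroup

variable {G Q : Type*} [Group G] [Group Q]

def powSubgroup (n : ℕ) (K : Subgroup G) : Subgroup G :=
  closure ((· ^ n) '' (K : Set G))

theorem pow_mem_powSubgroup {n : ℕ} {K : Subgroup G} {x : G} (hx : x ∈ K) :
    x ^ n ∈ powSubgroup n K :=
  subset_closure ⟨x, hx, rfl⟩

theorem powSubgroup_le_iff {n : ℕ} {K H : Subgroup G} :
    powSubgroup n K ≤ H ↔ ∀ x ∈ K, x ^ n ∈ H := by
  simp [powSubgroup, closure_le, Set.subset_def]

theorem powSubgroup_le_self (n : ℕ) (K : Subgroup G) : powSubgroup n K ≤ K :=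
  powSubgroup_le_iff.2 fun _ hx => pow_mem hx n

theorem powSubgroup_mono {n : ℕ} {K L : Subgroup G} (h : K ≤ L) :
    powSubgroup n K ≤ powSubgroup n L :=
  closure_mono (Set.image_mono h)

theorem powSubgroup_le_of_dvd {m n : ℕ} (h : m ∣ n) (K : Subgroup G) :
    powSubgroup n K ≤ powSubgroup m K := by
  obtain ⟨k, rfl⟩ := h
  refine powSubgroup_le_iff.2 fun x hx => ?_
  rw [pow_mul]
  exact pow_mem (pow_mem_powSubgroup hx) k

theorem powSubgroup_mul_le (m n : ℕ) (K : Subgroup G) :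
    powSubgroup (m * n) K ≤ powSubgroup n (powSubgroup m K) :=
  powSubgroup_le_iff.2 fun x hx => pow_mul x m n ▸ pow_mem_powSubgroup (pow_mem_powSubgroup hx)

theorem map_powSubgroup (f : G →* Q) (n : ℕ) (K : Subgroup G) :
    (powSubgroup n K).map f = powSubgroup n (K.map f) := by
  rw [powSubgroup, powSubgroup, MonoidHom.map_closure, coe_map, Set.image_image,
    Set.image_image]
  simp only [map_pow]

instance powSubgroup_normal (n : ℕ) (K : Subgroup G) [K.Normal] : (powSubgroup n K).Normal :=
  normal_iff_map_conj_eq.2 fun g => by rw [map_powSubgroup, Normal.map_conj_eq]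

theorem map_subtype_powSubgroup_top (L : Subgroup G) (n : ℕ) :
    (powSubgroup n (⊤ : Subgroup L)).map L.subtype = powSubgroup n L := by
  rw [map_powSubgroup, ← MonoidHom.range_eq_map, range_subtype]

theorem mem_powSubgroup_top_iff {L : Subgroup G} {n : ℕ} {a : L} :
    a ∈ powSubgroup n (⊤ : Subgroup L) ↔ (a : G) ∈ powSubgroup n L := by
  rw [← map_subtype_powSubgroup_top L, ← L.coe_subtype, mem_map_iff_mem L.subtype_injective]

theorem commutator_top_le_powSubgroup_top_iff {L : Subgroup G} {n : ℕ} :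
    ⁅(⊤ : Subgroup L), ⊤⁆ ≤ powSubgroup n (⊤ : Subgroup L) ↔ ⁅L, L⁆ ≤ powSubgroup n L := by
  rw [← map_le_map_iff_of_injective L.subtype_injective, map_commutator,
    map_subtype_powSubgroup_top, ← MonoidHom.range_eq_map, range_subtype]

theorem exists_pow_eq_of_mem_powSubgroup_of_subtype {L : Subgroup G} {n : ℕ}
    (h : ∀ a ∈ powSubgroup n (⊤ : Subgroup L), ∃ b : L, b ^ n = a) {g : G}
    (hg : g ∈ powSubgroup n L) : ∃ y ∈ L, y ^ n = g := by
  obtain ⟨b, hb⟩ := h ⟨g, powSubgroup_le_self n L hg⟩ (mem_powSubgroup_top_iff.2 hg)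
  exact ⟨b, b.2, congrArg Subtype.val hb⟩

theorem map_commutator_top_le_powSubgroup {f : G →* Q} (hf : Function.Surjective f) {n : ℕ}
    {N : Subgroup G} (h : ⁅N, ⊤⁆ ≤ powSubgroup n N) :
    ⁅N.map f, ⊤⁆ ≤ powSubgroup n (N.map f) := by
  simpa [map_commutator, map_top_of_surjective f hf, map_powSubgroup] using map_mono (f := f) h

end PowSubgroup

section Card

variable {G : Type*} [Group G] [Finite G]

theorem card_quotient_lt {T : Subgroup G} [T.Normal] (hT : T ≠ ⊥) :
    Nat.card (G ⧸ T) < Nat.card G := by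
  rw [card_eq_card_quotient_mul_card_subgroup T]
  exact lt_mul_of_one_lt_right Nat.card_pos ((one_lt_card_iff_ne_bot T).2 hT)

theorem card_lt_of_ne_top {L : Subgroup G} (hL : L ≠ ⊤) : Nat.card L < Nat.card G :=
  lt_of_le_of_ne L.card_le_card_group (mt L.eq_top_of_card_eq hL)

end Card


section PGroup

variable {p : ℕ} [hp : Fact p.Prime] {G : Type*} [Group G] [Finite G]

theorem IsPGroup.index_eq_of_isCoatom (hG : IsPGroup p G) {M : Subgroup G} (hM : IsCoatom M) :
    M.index = p := by
  obtain ⟨n, hn⟩ := IsPGroup.iff_card.mp (hG.to_subgroup M)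
  obtain ⟨k, hk⟩ := hG.index M
  have hk0 : k ≠ 0 := by
    rintro rfl
    exact hM.1 (index_eq_one.mp (by rw [hk, pow_zero]))
  have hcard : Nat.card G = p ^ n * p ^ k := by rw [← hn, ← hk, card_mul_index]
  obtain ⟨K, hK, hMK⟩ := Sylow.exists_subgroup_card_pow_succ (p := p)
    (hcard ▸ pow_succ p n ▸ mul_dvd_mul_left _ (dvd_pow_self p hk0)) hn
  have hKM : K ≠ M := by
    rintro rfl
    exact n.succ_ne_self (Nat.pow_right_injective hp.out.two_le (hK.symm.trans hn))
  have hcardG : Nat.card M * M.index = Nat.card M * p := by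
    rw [card_mul_index, hn, ← pow_succ, ← hK, hM.2 K (lt_of_le_of_ne hMK hKM.symm), card_top]
  exact Nat.eq_of_mul_eq_mul_left Nat.card_pos hcardG

theorem IsPGroup.pow_mem_of_isCoatom (hG : IsPGroup p G) {M : Subgroup G} (hM : IsCoatom M)
    (x : G) : x ^ p ∈ M := by
  have := hG.isNilpotent
  have := NormalizerCondition.normal_of_coatom M Group.normalizerCondition_of_isNilpotent hM
  simpa [hG.index_eq_of_isCoatom hM] using M.pow_index_mem x

theorem IsPGroup.powSubgroup_top_le_frattini (hG : IsPGroup p G) :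
    powSubgroup p (⊤ : Subgroup G) ≤ frattini G :=
  powSubgroup_le_iff.2 fun x _ => by
    simp only [frattini, Order.radical, mem_iInf]
    exact fun M hM => hG.pow_mem_of_isCoatom hM x

theorem IsPGroup.eq_top_of_sup_powSubgroup_eq_top (hG : IsPGroup p G) {H : Subgroup G}
    (h : H ⊔ powSubgroup p ⊤ = ⊤) : H = ⊤ :=
  frattini_nongenerating (top_le_iff.1 (h ▸ sup_le_sup_left hG.powSubgroup_top_le_frattini H))

theorem IsPGroup.powSubgroup_top_ne_top [Nontrivial G] (hG : IsPGroup p G) :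
    powSubgroup p (⊤ : Subgroup G) ≠ ⊤ := fun h =>
  bot_ne_top (hG.eq_top_of_sup_powSubgroup_eq_top (by rw [bot_sup_eq]; exact h))

theorem IsPGroup.exists_mem_center_orderOf_eq (hG : IsPGroup p G) {N : Subgroup G} [N.Normal]
    (hN : N ≠ ⊥) : ∃ w ∈ N, w ∈ center G ∧ orderOf w = p := by
  have hdvd : p ∣ Nat.card N :=
    (hG.to_subgroup N).card_eq_or_dvd.resolve_left (by rwa [card_eq_one])
  obtain ⟨b, hb, hb1⟩ :=
    (hG.of_equiv ConjAct.toConjAct).exists_fixed_point_of_prime_dvd_card_of_fixed_point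
    N hdvd (a := 1) (fun g => smul_one g)
  have hbc : (b : G) ∈ center G := by
    rw [← SetLike.mem_coe, ← ConjAct.fixedPoints_eq_center]
    exact fun g => congrArg Subtype.val (hb g)
  have hb1' : (b : G) ≠ 1 := fun h => hb1 (Subtype.ext h).symm
  obtain ⟨w, hw⟩ := exists_prime_orderOf_dvd_card' (G := zpowers (b : G)) p
    (Nat.card_zpowers (b : G) ▸ hG.dvd_orderOf hb1')
  have hwb : (w : G) ∈ zpowers (b : G) := w.2
  exact ⟨w, zpowers_le.2 b.2 hwb, zpowers_le.2 hbc hwb, by rw [Subgroup.orderOf_coe, hw]⟩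

end PGroup

def powerfulExponent (p : ℕ) : ℕ := if p = 2 then 4 else p

theorem dvd_powerfulExponent (p : ℕ) : p ∣ powerfulExponent p := by
  unfold powerfulExponent
  split_ifs with h
  · exact h ▸ ⟨2, rfl⟩
  · exact dvd_rfl

section PowerfullyEmbedded

variable {p : ℕ} [hp : Fact p.Prime] {G : Type*} [Group G] {N : Subgroup G}

theorem powSubgroup_le_center_of_two_lt (hp2 : 2 < p) (hN : ⁅N, ⊤⁆ ≤ powSubgroup p N)
    (hD : powSubgroup p (powSubgroup p N) = ⊥)
    (hZ : ∀ z ∈ ⁅powSubgroup p N, (⊤ : Subgroup G)⁆, z ∈ center G ∧ z ^ p = 1) :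
    powSubgroup p N ≤ center G := by
  refine powSubgroup_le_iff.2 fun x hx => mem_center_iff_commutatorElement_eq_one.2 fun g => ?_
  have hc : ⁅x, g⁆ ∈ powSubgroup p N := hN (commutator_mem_commutator hx (mem_top g))
  obtain ⟨hzc, hzp⟩ := hZ ⁅x, ⁅x, g⁆⁆ <| by
    rw [← commutatorElement_inv]
    exact inv_mem (commutator_mem_commutator hc (mem_top x))
  have hcp : ⁅x, g⁆ ^ p = 1 := mem_bot.1 (hD ▸ pow_mem_powSubgroup hc)
  obtain ⟨t, ht⟩ := hp.out.dvd_choose_self two_ne_zero hp2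
  rw [commutatorElement_pow_left x g hzc, hcp, ht, pow_mul, hzp, one_pow, one_mul]

theorem powSubgroup_two_le_center (hN : ⁅N, ⊤⁆ ≤ powSubgroup 4 N)
    (hD : powSubgroup 4 (powSubgroup 2 N) = ⊥)
    (hZ : ∀ z ∈ ⁅powSubgroup 2 N, (⊤ : Subgroup G)⁆, z ∈ center G ∧ z ^ 2 = 1) :
    powSubgroup 2 N ≤ center G := by
  have hcen : powSubgroup 2 (powSubgroup 2 N) ≤ center G :=
    powSubgroup_le_iff.2 fun m hm => mem_center_iff_commutatorElement_eq_one.2 fun g => by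
      obtain ⟨hc, hc2⟩ := hZ _ (commutator_mem_commutator hm (mem_top g))
      rw [commutatorElement_pow_left_of_mem_center hc, hc2]
  have hexp : ∀ c ∈ powSubgroup 2 (powSubgroup 2 N), c ^ 2 = 1 := by
    intro c hc
    induction hc using closure_induction with
    | mem _ h =>
      obtain ⟨m, hm, rfl⟩ := h
      rw [← pow_mul]
      exact mem_bot.1 (hD ▸ pow_mem_powSubgroup hm)
    | one => exact one_pow 2
    | mul a b ha hb ha2 hb2 =>
      rw [(Commute.mul_pow (mem_center_iff.1 (hcen hb) a)), ha2, hb2, one_mul]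
    | inv a _ ha2 => rw [inv_pow, ha2, inv_one]
  refine powSubgroup_le_iff.2 fun x hx => mem_center_iff_commutatorElement_eq_one.2 fun g => ?_
  have hc := powSubgroup_mul_le 2 2 N (hN (commutator_mem_commutator hx (mem_top g)))
  rw [commutatorElement_pow_left_of_mem_center (hcen hc), hexp _ hc]

theorem powSubgroup_le_center_of_commutator_le
    (hN : ⁅N, ⊤⁆ ≤ powSubgroup (powerfulExponent p) N)
    (hD : powSubgroup (powerfulExponent p) (powSubgroup p N) = ⊥)
    (hZ : ∀ z ∈ ⁅powSubgroup p N, (⊤ : Subgroup G)⁆, z ∈ center G ∧ z ^ p = 1) :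
    powSubgroup p N ≤ center G := by
  unfold powerfulExponent at hN hD
  split_ifs at hN hD with h2
  · subst h2
    exact powSubgroup_two_le_center hN hD hZ
  · exact powSubgroup_le_center_of_two_lt (hp.out.two_le.lt_of_ne' h2) hN hD hZ

theorem IsPGroup.commutator_powSubgroup_le [Finite G] (hG : IsPGroup p G)
    (hN : ⁅N, ⊤⁆ ≤ powSubgroup (powerfulExponent p) N) :
    ⁅powSubgroup p N, ⊤⁆ ≤ powSubgroup (powerfulExponent p) (powSubgroup p N) := by
  induction hn : Nat.card G using Nat.strong_induction_on generalizing G with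
  | _ n ih =>
  have : N.Normal := commutator_top_right_le_iff.1 (hN.trans (powSubgroup_le_self _ _))
  have hquot (T : Subgroup G) [T.Normal] (hT : T ≠ ⊥) :
      ⁅powSubgroup p N, ⊤⁆ ≤ powSubgroup (powerfulExponent p) (powSubgroup p N) ⊔ T := by
    have hsurj := QuotientGroup.mk'_surjective T
    have h := ih _ (hn ▸ card_quotient_lt hT) (hG.to_quotient T)
      (map_commutator_top_le_powSubgroup hsurj hN) rfl
    rw [← map_powSubgroup, ← map_powSubgroup, ← map_top_of_surjective _ hsurj,
      ← map_commutator, map_le_map_iff', QuotientGroup.ker_mk'] at h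
    exact le_sup_left.trans h
  by_cases hD : powSubgroup (powerfulExponent p) (powSubgroup p N) = ⊥
  · by_cases hZ : ⁅powSubgroup p N, (⊤ : Subgroup G)⁆ = ⊥
    · exact hZ ▸ bot_le
    obtain ⟨w, -, hwc, hwp⟩ := hG.exists_mem_center_orderOf_eq hZ
    have hW : zpowers w ≤ center G := zpowers_le.2 hwc
    have := normal_of_le_center hW
    have hw1 : w ≠ 1 := fun h => hp.out.ne_one (by rw [← hwp, h, orderOf_one])
    have hZW := hquot _ (zpowers_eq_bot.not.2 hw1)
    rw [hD, bot_sup_eq] at hZW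
    have hcen := powSubgroup_le_center_of_commutator_le hN hD fun z hz =>
      ⟨hW (hZW hz), orderOf_dvd_iff_pow_eq_one.1 (hwp ▸ orderOf_dvd_of_mem_zpowers (hZW hz))⟩
    rw [commutator_top_right_eq_bot_iff_le_center.2 hcen]
    exact bot_le
  · simpa using hquot _ hD

end PowerfullyEmbedded

section FinitePowerful

variable {p : ℕ} [hp : Fact p.Prime] {G : Type*} [Group G]

theorem pow_choose_two_mem_powSubgroup {w : G}
    (hw : w ∈ powSubgroup (powerfulExponent p) (⊤ : Subgroup G)) :
    w ^ p.choose 2 ∈ powSubgroup p (powSubgroup p ⊤) := by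
  unfold powerfulExponent at hw
  split_ifs at hw with h2
  · subst h2
    simpa using powSubgroup_mul_le 2 2 ⊤ hw
  · obtain ⟨t, ht⟩ := hp.out.dvd_choose_self two_ne_zero (hp.out.two_le.lt_of_ne' h2)
    rw [ht, pow_mul']
    exact pow_mem_powSubgroup (pow_mem hw t)

theorem exists_pow_eq_of_powSubgroup_le_center
    (hG : ⁅(⊤ : Subgroup G), (⊤ : Subgroup G)⁆ ≤ powSubgroup (powerfulExponent p) ⊤)
    (hK : powSubgroup p (⊤ : Subgroup G) ≤ center G)
    (hM : powSubgroup p (powSubgroup p (⊤ : Subgroup G)) = ⊥) {g : G}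
    (hg : g ∈ powSubgroup p ⊤) : ∃ x : G, x ^ p = g := by
  induction hg using closure_induction with
  | mem _ h =>
    obtain ⟨x, -, rfl⟩ := h
    exact ⟨x, rfl⟩
  | one => exact ⟨1, one_pow p⟩
  | mul _ _ _ _ ha hb =>
    obtain ⟨a, rfl⟩ := ha
    obtain ⟨b, rfl⟩ := hb
    have hw := hG (commutator_mem_commutator (mem_top b) (mem_top a))
    have hw1 : ⁅b, a⁆ ^ p.choose 2 = 1 := mem_bot.1 (hM ▸ pow_choose_two_mem_powSubgroup hw)
    refine ⟨a * b, ?_⟩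
    rw [mul_pow_of_commutatorElement_mem_center a b
        (hK (powSubgroup_le_of_dvd (dvd_powerfulExponent p) ⊤ hw)), hw1, mul_one]
  | inv _ _ h =>
    obtain ⟨x, rfl⟩ := h
    exact ⟨x⁻¹, inv_pow x p⟩

theorem IsPGroup.exists_pow_eq_of_mem_powSubgroup [Finite G] (hG : IsPGroup p G)
    (hpow : ⁅(⊤ : Subgroup G), (⊤ : Subgroup G)⁆ ≤ powSubgroup (powerfulExponent p) ⊤) {g : G}
    (hg : g ∈ powSubgroup p ⊤) : ∃ x : G, x ^ p = g := by
  induction hn : Nat.card G using Nat.strong_induction_on generalizing G g with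
  | _ n ih =>
  set K := powSubgroup p (⊤ : Subgroup G)
  have hK : ⁅K, ⊤⁆ ≤ powSubgroup (powerfulExponent p) K := hG.commutator_powSubgroup_le hpow
  have ih_sub (L : Subgroup G) (hL : L ≠ ⊤) (hLL : ⁅L, L⁆ ≤ powSubgroup (powerfulExponent p) L)
      {a : G} (ha : a ∈ powSubgroup p L) : ∃ y ∈ L, y ^ p = a :=
    exists_pow_eq_of_mem_powSubgroup_of_subtype (fun _ hb => ih _ (hn ▸ card_lt_of_ne_top hL)
      (hG.to_subgroup L) (commutator_top_le_powSubgroup_top_iff.2 hLL) hb rfl) ha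
  rcases subsingleton_or_nontrivial G with _ | _
  · exact ⟨g, Subsingleton.elim _ _⟩
  by_cases hM : powSubgroup p K = ⊥
  · refine exists_pow_eq_of_powSubgroup_le_center hpow ?_ hM hg
    rw [← commutator_top_right_eq_bot_iff_le_center, eq_bot_iff, ← hM]
    exact hK.trans (powSubgroup_le_of_dvd (dvd_powerfulExponent p) K)
  obtain ⟨x, hx⟩ : ∃ x : G, (x ^ p)⁻¹ * g ∈ powSubgroup p K := by
    have hsurj := QuotientGroup.mk'_surjective (powSubgroup p K)
    have hmem := mem_map_of_mem (QuotientGroup.mk' (powSubgroup p K)) hg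
    rw [map_powSubgroup, map_top_of_surjective _ hsurj] at hmem
    have hpow' := map_commutator_top_le_powSubgroup hsurj hpow
    rw [map_top_of_surjective _ hsurj] at hpow'
    obtain ⟨y, hy⟩ := ih _ (hn ▸ card_quotient_lt hM) (hG.to_quotient _) hpow' hmem rfl
    obtain ⟨x, rfl⟩ := hsurj y
    exact ⟨x, QuotientGroup.eq.1 (by simpa using hy)⟩
  obtain ⟨y, hyK, hy⟩ :=
    ih_sub K hG.powSubgroup_top_ne_top ((commutator_mono le_rfl le_top).trans hK) hx
  have hg : g = x ^ p * y ^ p := by rw [hy, mul_inv_cancel_left]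
  -- `⟨x⟩⟨G^p⟩` is powerful: either it is `G`, which is then cyclic, or induction applies to it.
  by_cases hL : zpowers x ⊔ K = ⊤
  · obtain ⟨k, rfl⟩ := mem_zpowers_iff.1 (hG.eq_top_of_sup_powSubgroup_eq_top hL ▸ mem_top y)
    exact ⟨x * x ^ k, by rw [((Commute.refl x).zpow_right k).mul_pow, hg]⟩
  · obtain ⟨c, -, hc⟩ := ih_sub _ hL
      ((commutator_zpowers_sup_le hK x).trans (powSubgroup_mono le_sup_right))
      (hg ▸ mul_mem (pow_mem_powSubgroup (mem_sup_left (mem_zpowers x)))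
        (pow_mem_powSubgroup (mem_sup_right hyK)))
    exact ⟨c, hc⟩

end FinitePowerful

section LowerPSeries

variable {p : ℕ} {G Q : Type*} [Group G] [TopologicalSpace G] [IsTopologicalGroup G]
  [Group Q] [TopologicalSpace Q] [IsTopologicalGroup Q]

theorem topologicalClosure_eq_self_of_discreteTopology [DiscreteTopology G] (S : Subgroup G) :
    S.topologicalClosure = S :=
  le_antisymm (S.topologicalClosure_minimal le_rfl (isClosed_discrete _)) S.le_topologicalClosure

theorem map_topologicalClosure_le {f : G →* Q} (hf : Continuous f) (S : Subgroup G) :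
    S.topologicalClosure.map f ≤ (S.map f).topologicalClosure :=
  map_le_iff_le_comap.2 <| S.topologicalClosure_minimal
    ((le_comap_map f S).trans (comap_mono (le_topologicalClosure _)))
    ((isClosed_topologicalClosure _).preimage hf)

theorem pow_mem_lowerPSeries (x : G) (i : ℕ) : x ^ p ^ i ∈ lowerPSeries p G i := by
  induction i with
  | zero => exact mem_top _
  | succ i ih =>
    rw [pow_succ, pow_mul]
    exact le_topologicalClosure _ (mem_sup_left (pow_mem_powSubgroup ih))

theorem map_lowerPSeries_le {f : G →* Q} (hf : Continuous f) (i : ℕ) :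
    (lowerPSeries p G i).map f ≤ lowerPSeries p Q i := by
  induction i with
  | zero => exact le_top
  | succ i ih =>
    refine (map_topologicalClosure_le hf _).trans (topologicalClosure_mono ?_)
    rw [Subgroup.map_sup, map_commutator, ← powSubgroup, map_powSubgroup]
    exact sup_le_sup (powSubgroup_mono ih) (commutator_mono ih le_top)

theorem lowerPSeries_succ_of_discreteTopology [DiscreteTopology G] (i : ℕ) :
    lowerPSeries p G (i + 1) = powSubgroup p (lowerPSeries p G i) ⊔ ⁅lowerPSeries p G i, ⊤⁆ :=
  topologicalClosure_eq_self_of_discreteTopology _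

theorem IsPGroup.coe_lowerPSeries_eq_range_pow [Fact p.Prime] [DiscreteTopology G] [Finite G]
    (hG : IsPGroup p G)
    (hpow : ⁅(⊤ : Subgroup G), (⊤ : Subgroup G)⁆ ≤ powSubgroup (powerfulExponent p) ⊤) (i : ℕ) :
    (lowerPSeries p G i : Set G) = Set.range (fun x : G => x ^ p ^ i) := by
  suffices h : ∀ i, ⁅lowerPSeries p G i, ⊤⁆ ≤
      powSubgroup (powerfulExponent p) (lowerPSeries p G i) ∧
      (lowerPSeries p G i : Set G) ⊆ Set.range (fun x : G => x ^ p ^ i) from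
    (h i).2.antisymm (Set.range_subset_iff.2 (pow_mem_lowerPSeries · i))
  intro i
  induction i with
  | zero => exact ⟨hpow, fun x _ => ⟨x, by simp⟩⟩
  | succ i ih =>
    obtain ⟨hpe, hset⟩ := ih
    have hstep : lowerPSeries p G (i + 1) = powSubgroup p (lowerPSeries p G i) := by
      rw [lowerPSeries_succ_of_discreteTopology, sup_eq_left]
      exact hpe.trans (powSubgroup_le_of_dvd (dvd_powerfulExponent p) _)
    rw [hstep]
    refine ⟨hG.commutator_powSubgroup_le hpe, fun g hg => ?_⟩
    obtain ⟨y, hy, rfl⟩ := exists_pow_eq_of_mem_powSubgroup_of_subtype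
      (fun _ ha => (hG.to_subgroup _).exists_pow_eq_of_mem_powSubgroup
        (commutator_top_le_powSubgroup_top_iff.2 ((commutator_mono le_rfl le_top).trans hpe)) ha)
      hg
    obtain ⟨x, rfl⟩ := hset hy
    exact ⟨x, by simp [pow_succ, pow_mul]⟩

end LowerPSeries

section Profinite

variable {G Q : Type*} [Group G] [TopologicalSpace G] [IsTopologicalGroup G]
  [Group Q] [TopologicalSpace Q] [IsTopologicalGroup Q]

theorem IsClosed.mem_of_forall_openNormalSubgroup [CompactSpace G] [TotallyDisconnectedSpace G]
    {S : Set G} (hS : IsClosed S) {g : G}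
    (h : ∀ N : OpenNormalSubgroup G, ∃ s ∈ S, (s : G ⧸ N.toSubgroup) = g) : g ∈ S := by
  by_contra hg
  have hU : IsOpen {x : G | g * x⁻¹ ∉ S} :=
    hS.isOpen_compl.preimage (continuous_const.mul continuous_inv)
  obtain ⟨N, hN⟩ :=
    ProfiniteGrp.exist_openNormalSubgroup_sub_open_nhds_of_one hU (by simpa using hg)
  obtain ⟨s, hs, hsg⟩ := h N
  exact hN (QuotientGroup.eq.1 hsg) (by simpa using hs)

theorem IsPowerful.commutator_top_le_powSubgroup {p : ℕ} (hG : IsPowerful p G)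
    [DiscreteTopology Q] {f : G →* Q} (hf : Continuous f) (hsurj : Function.Surjective f) :
    ⁅(⊤ : Subgroup Q), (⊤ : Subgroup Q)⁆ ≤ powSubgroup (powerfulExponent p) ⊤ := by
  have hG' (x y : G) : ⁅x, y⁆ ∈ (powSubgroup (powerfulExponent p) ⊤).topologicalClosure := by
    rcases hG with ⟨hodd, h⟩ | ⟨rfl, h⟩
    · rw [powerfulExponent, if_neg (by rintro rfl; exact absurd hodd (by decide))]
      exact h x y
    · exact h x y
  rw [commutator_le]
  intro a _ b _
  obtain ⟨x, rfl⟩ := hsurj a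
  obtain ⟨y, rfl⟩ := hsurj b
  have h := map_topologicalClosure_le hf _ (mem_map_of_mem f (hG' x y))
  rwa [topologicalClosure_eq_self_of_discreteTopology, map_powSubgroup,
    map_top_of_surjective f hsurj, map_commutatorElement] at h

end Profinite

theorem stmt7_general (p : ℕ) [hp : Fact p.Prime] (H : Type*) [Group H] [TopologicalSpace H]
    [IsTopologicalGroup H] (hProP : IsProP p H) (hPow : IsPowerful p H) :
    ∀ i : ℕ, (lowerPSeries p H i : Set H) = Set.range (fun x : H => x ^ (p ^ i)) := by
  obtain ⟨_, _, _, hindex⟩ := hProP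
  intro i
  refine subset_antisymm (fun g hg => ?_) (Set.range_subset_iff.2 (pow_mem_lowerPSeries · i))
  refine (isCompact_range (continuous_pow _)).isClosed.mem_of_forall_openNormalSubgroup
    fun N => ?_
  let π := QuotientGroup.mk' N.toSubgroup
  have hπ : Continuous π := QuotientGroup.continuous_mk
  have hsurj : Function.Surjective π := QuotientGroup.mk'_surjective _
  obtain ⟨m, hm⟩ := hindex N.toSubgroup inferInstance N.isOpen
  have hQ := (IsPGroup.of_card hm).coe_lowerPSeries_eq_range_pow
    (hPow.commutator_top_le_powSubgroup hπ hsurj) i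
  have hg' : π g ∈ (lowerPSeries p (H ⧸ N.toSubgroup) i : Set _) :=
    map_lowerPSeries_le hπ i (mem_map_of_mem π hg)
  rw [hQ] at hg'
  obtain ⟨x, hx⟩ := hg'
  obtain ⟨x, rfl⟩ := hsurj x
  exact ⟨x ^ p ^ i, ⟨x, rfl⟩, hx⟩

theorem stmt7 (p : ℕ) [hp : Fact p.Prime] (H : Type*) [Group H] [TopologicalSpace H]
    [IsTopologicalGroup H] (hProP : IsProP p H) (hPow : IsPowerful p H) (hFG : TopFG H) :
    ∀ i : ℕ, (lowerPSeries p H i : Set H) = Set.range (fun x : H => x ^ (p ^ i)) :=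
  stmt7_general p (hp := hp) H hProP hPow
end
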